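/- arXiv:1806.09767 — 8 statements merged into one kernel-verified Lean document; each statement's English description precedes it below -/
import Mathlib

section
/- For every nonnegative integer N and complex numbers z, w (avoiding poles of the Gamma functions involved), we have \(\sum_{i=0}^{N} (-1)^i \binom{N}{i} \frac{\Gamma(z+i)}{\Gamma(w+i)} = \frac{\Gamma(z)}{\Gamma(w-z)} \cdot \frac{\Gamma(w-z+N)}{\Gamma(w+N)}\). -/
/-!
Writing `Γ(z + i) = Γ(z) (z)ᵢ` and `Γ(w - z + N) = Γ(w - z) (w - z)_N` reduces the identity to
`∑ᵢ (-1)ⁱ C(N, i) (z)ᵢ / Γ(w + i) = (w - z)_N / Γ(w + N)`, an identity of entire functions of `w`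
(`(Gamma s)⁻¹` vanishes at the poles, as `1 / Γ` does). Its left side is `(-1)ᴺ Δᴺ g(0)` for
`g(i) = (z)ᵢ / Γ(w + i)`, and `1 / Γ(s) = s / Γ(s + 1)` gives `Δ g = -(w - z) g`, with `w` shifted
to `w + 1` on the right; iterating, `Δᴺ g = (-1)ᴺ (w - z)_N g` with `w` shifted to `w + N`.
-/

open Complex Finset
open scoped fwdDiff

lemma neg_one_pow_mul_neg_one_pow_sub {R : Type*} [Monoid R] [HasDistribNeg R] {k n : ℕ}
    (hk : k ≤ n) : (-1 : R) ^ n * (-1) ^ (n - k) = (-1) ^ k := by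
  obtain ⟨j, rfl⟩ := Nat.exists_eq_add_of_le hk
  rw [Nat.add_sub_cancel_left, pow_add, mul_assoc, ← pow_add, ← two_mul, pow_mul, neg_one_sq,
    one_pow, mul_one]

open Polynomial in
lemma ascPochhammer_succ_eval_left {S : Type*} [CommSemiring S] (n : ℕ) (x : S) :
    (ascPochhammer S (n + 1)).eval x = x * (ascPochhammer S n).eval (x + 1) := by
  rw [ascPochhammer_succ_left, eval_mul, eval_X, eval_comp, eval_add, eval_X, eval_one]

namespace Complex

lemma Gamma_add_nat_eq_mul_ascPochhammer {s : ℂ} (hs : ∀ m : ℕ, s ≠ -m) (n : ℕ) :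
    Gamma (s + n) = Gamma s * (ascPochhammer ℂ n).eval s := by
  rw [← Gamma_add_nat_div_Gamma_eq s hs, mul_div_cancel₀ _ (Gamma_ne_zero hs)]

lemma fwdDiff_ascPochhammer_mul_inv_Gamma (z w : ℂ) :
    Δ_[1] (fun i : ℕ ↦ (ascPochhammer ℂ i).eval z * (Gamma (w + i))⁻¹) =
      -(w - z) • fun i : ℕ ↦ (ascPochhammer ℂ i).eval z * (Gamma (w + 1 + i))⁻¹ := by
  ext i
  simp only [fwdDiff, Pi.smul_apply, smul_eq_mul]
  rw [ascPochhammer_succ_eval, one_div_Gamma_eq_self_mul_one_div_Gamma_add_one (w + i)]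
  push_cast
  ring_nf

lemma fwdDiff_iter_ascPochhammer_mul_inv_Gamma (N : ℕ) (z w : ℂ) :
    (Δ_[1])^[N] (fun i : ℕ ↦ (ascPochhammer ℂ i).eval z * (Gamma (w + i))⁻¹) =
      ((-1) ^ N * (ascPochhammer ℂ N).eval (w - z)) •
        fun i : ℕ ↦ (ascPochhammer ℂ i).eval z * (Gamma (w + N + i))⁻¹ := by
  induction N generalizing w with
  | zero => simp
  | succ N ih =>
    rw [Function.iterate_succ_apply, fwdDiff_ascPochhammer_mul_inv_Gamma, fwdDiff_iter_const_smul,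
      ih, smul_smul, ascPochhammer_succ_eval_left]
    push_cast
    ring_nf

theorem sum_range_neg_one_pow_mul_choose_mul_ascPochhammer_mul_inv_Gamma (N : ℕ) (z w : ℂ) :
    ∑ i ∈ range (N + 1), (-1) ^ i * (N.choose i : ℂ) *
        ((ascPochhammer ℂ i).eval z * (Gamma (w + i))⁻¹) =
      (ascPochhammer ℂ N).eval (w - z) * (Gamma (w + N))⁻¹ := by
  have h := congr_fun (fwdDiff_iter_ascPochhammer_mul_inv_Gamma N z w) 0
  rw [fwdDiff_iter_eq_sum_shift] at h
  simp only [zero_add, mul_one, Pi.smul_apply, smul_eq_mul, ascPochhammer_zero,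
    Polynomial.eval_one, one_mul, Nat.cast_zero, add_zero, zsmul_eq_mul] at h
  calc _ = (-1) ^ N * ∑ k ∈ range (N + 1), ((((-1) ^ (N - k) * N.choose k : ℤ) : ℂ) *
        ((ascPochhammer ℂ k).eval z * (Gamma (w + k))⁻¹)) := by
        rw [mul_sum]
        refine sum_congr rfl fun k hk ↦ ?_
        push_cast
        rw [← neg_one_pow_mul_neg_one_pow_sub (Nat.lt_succ_iff.mp (mem_range.mp hk))]
        ring
    _ = _ := by
        rw [h, ← mul_assoc, ← mul_assoc, ← mul_pow, neg_one_mul, neg_neg, one_pow, one_mul]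

end Complex

theorem stmt0_general (N : ℕ) (z w : ℂ)
    (hz : ∀ n : ℕ, z ≠ -n) (hwz : ∀ n : ℕ, w - z ≠ -n) :
    ∑ i ∈ Finset.range (N + 1),
        (-1 : ℂ) ^ i * (N.choose i : ℂ) * (Complex.Gamma (z + i) / Complex.Gamma (w + i))
      = Complex.Gamma z / Complex.Gamma (w - z) *
          (Complex.Gamma (w - z + N) / Complex.Gamma (w + N)) := by
  calc _ = Gamma z * ∑ i ∈ range (N + 1), (-1) ^ i * (N.choose i : ℂ) *
        ((ascPochhammer ℂ i).eval z * (Gamma (w + i))⁻¹) := by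
        rw [mul_sum]
        refine sum_congr rfl fun i _ ↦ ?_
        rw [Gamma_add_nat_eq_mul_ascPochhammer hz, div_eq_mul_inv]
        ring
    _ = Gamma z * ((ascPochhammer ℂ N).eval (w - z) * (Gamma (w + N))⁻¹) := by
        rw [sum_range_neg_one_pow_mul_choose_mul_ascPochhammer_mul_inv_Gamma]
    _ = _ := by
        rw [Gamma_add_nat_eq_mul_ascPochhammer hwz]
        field_simp [Gamma_ne_zero hwz]

/-- Gamma-binomial identity:
`∑_{i=0}^N (-1)^i C(N,i) Γ(z+i)/Γ(w+i) = Γ(z)/Γ(w-z) · Γ(w-z+N)/Γ(w+N)`. -/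
theorem stmt0 (N : ℕ) (z w : ℂ)
    (hz : ∀ n : ℕ, z ≠ -n) (hw : ∀ n : ℕ, w ≠ -n) (hwz : ∀ n : ℕ, w - z ≠ -n) :
    ∑ i ∈ Finset.range (N + 1),
        (-1 : ℂ) ^ i * (N.choose i : ℂ) * (Complex.Gamma (z + i) / Complex.Gamma (w + i))
      = Complex.Gamma z / Complex.Gamma (w - z) *
          (Complex.Gamma (w - z + N) / Complex.Gamma (w + N)) :=
  stmt0_general N z w hz hwz
end

section
/- Let a, b, n be nonnegative integers with a \(\geq\) n. Then \(\sum_{j=0}^{n}(-1)^j\binom{a}{j}\binom{a+b+n-j}{a+b} = \binom{b+n}{b}\). -/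
open Finset

private def S' (a b n : ℕ) : ℤ :=
  ∑ j ∈ Finset.range (n + 1),
    (-1 : ℤ) ^ j * (a.choose j : ℤ) * ((a + b + n - j).choose (a + b) : ℤ)

private lemma S'_zero_left (b n : ℕ) : S' 0 b n = ((b + n).choose b : ℤ) := by
  unfold S'
  rw [Finset.sum_eq_single 0]
  · simp [Nat.add_comm]
  · intro j hj hj0
    rw [Nat.choose_eq_zero_of_lt (by omega)]
    simp
  · simp

private lemma S'_rec (a b n : ℕ) :
    S' (a + 1) b (n + 1) + S' a (b + 1) n = S' a (b + 1) (n + 1) := by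
  unfold S'
  rw [Finset.sum_range_succ' _ (n + 1), Finset.sum_range_succ' (fun j => (-1 : ℤ) ^ j * (a.choose j : ℤ) * (((a + (b+1) + (n+1) - j).choose (a + (b+1)) : ℤ))) (n + 1)]
  have h0 : ((a + 1 + b + (n + 1) - 0).choose (a + 1 + b) : ℤ)
      = ((a + (b + 1) + (n + 1) - 0).choose (a + (b + 1)) : ℤ) := by
    congr 2 <;> omega
  rw [add_right_comm]
  congr 1
  · rw [← Finset.sum_add_distrib]
    apply Finset.sum_congr rfl
    intro i hi
    simp only [Finset.mem_range] at hi
    have e1 : a + 1 + b + (n + 1) - (i + 1) = a + b + n + 1 - i := by omega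
    have e2 : a + (b + 1) + n - i = a + b + n + 1 - i := by omega
    have e3 : a + (b + 1) + (n + 1) - (i + 1) = a + b + n + 1 - i := by omega
    have e4 : a + 1 + b = a + (b + 1) := by omega
    rw [e1, e2, e3, e4]
    rw [Nat.choose_succ_succ a i]
    push_cast
    ring
  · simp only [pow_zero, Nat.choose_zero_right, Nat.cast_one, one_mul]
    exact h0

private lemma S'_eq (a b n : ℕ) : S' a b n = ((b + n).choose b : ℤ) := by
  induction a generalizing b n with
  | zero => exact S'_zero_left b n
  | succ a ih =>
    cases n with
    | zero =>
      unfold S'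
      simp
    | succ n =>
      have h := S'_rec a b n
      rw [ih (b + 1) n, ih (b + 1) (n + 1)] at h
      have hp : (b + 1 + (n + 1)).choose (b + 1)
          = (b + n + 1).choose b + (b + 1 + n).choose (b + 1) := by
        rw [show b + 1 + (n + 1) = b + n + 1 + 1 from by omega,
          show b + 1 + n = b + n + 1 from by omega, Nat.choose_succ_succ]
      have : S' (a + 1) b (n + 1) = ((b + 1 + (n + 1)).choose (b + 1) : ℤ)
          - ((b + 1 + n).choose (b + 1) : ℤ) := by linarith
      rw [this, hp]
      push_cast
      have e : b + (n + 1) = b + n + 1 := by omega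
      rw [e]
      ring

/-- For nonnegative integers `a b n` with `a ≥ n`:
`∑_{j=0}^n (-1)^j C(a,j) C(a+b+n-j, a+b) = C(b+n, b)`. -/
theorem stmt2 (a b n : ℕ) (h : n ≤ a) :
    ∑ j ∈ Finset.range (n + 1),
        (-1 : ℤ) ^ j * (a.choose j : ℤ) * ((a + b + n - j).choose (a + b) : ℤ)
      = ((b + n).choose b : ℤ) := by
  exact S'_eq a b n
end

section
/- For a positive integer k and nonnegative integer m, \(\sum_{i=0}^{m}\sum_{j=0}^{m}(-1)^{i+j}\binom{m}{i}\binom{m}{j}\frac{\Gamma(k+i+j)}{\Gamma(k+i)\Gamma(k+j)} = \frac{\Gamma(m+1)}{\Gamma(k+m)}\). -/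
open Finset
open Nat

lemma key_int (m a i : ℕ) :
    ∑ j ∈ Finset.range (m + 1), (-1 : ℤ) ^ (m - j) * (m.choose j) * ((a + j).choose i)
      = if m ≤ i then (a.choose (i - m) : ℤ) else 0 := by
  have H := fwdDiff_iter_eq_sum_shift (1 : ℕ) (fun x => ((x.choose i : ℤ))) m a
  simp only [smul_eq_mul, mul_one, zsmul_eq_mul, Int.cast_mul, Int.cast_pow,
    Int.cast_neg, Int.cast_one, Int.cast_natCast, ← mul_assoc] at H
  rw [← H]
  rcases le_or_gt m i with h | h
  · obtain ⟨j, rfl⟩ := Nat.exists_eq_add_of_le h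
    rw [if_pos h, fwdDiff_iter_choose j m, Nat.add_sub_cancel_left]
  · rw [if_neg h.not_ge]
    obtain ⟨r, rfl⟩ := Nat.exists_eq_add_of_lt h
    simp_rw [(by ring : i + r + 1 = r + 1 + i), Function.iterate_add_apply,
      (by rw [add_zero] : (fun x : ℕ => (x.choose i : ℤ)) = fun x => x.choose (i + 0)),
      fwdDiff_iter_choose 0 i, Nat.choose_zero_right, Nat.cast_one, Function.iterate_one,
      fwdDiff_const, fwdDiff_iter_eq_sum_shift, smul_zero, sum_const_zero]

lemma key_real (m a i : ℕ) :
    ∑ j ∈ Finset.range (m + 1), (-1 : ℝ) ^ j * (m.choose j) * ((a + j).choose i)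
      = (-1 : ℝ) ^ m * (if m ≤ i then (a.choose (i - m) : ℝ) else 0) := by
  have h2 : (∑ j ∈ Finset.range (m + 1),
        (-1 : ℝ) ^ (m - j) * (m.choose j) * ((a + j).choose i))
      = if m ≤ i then (a.choose (i - m) : ℝ) else 0 := by
    exact_mod_cast congrArg (fun z : ℤ => (z : ℝ)) (key_int m a i)
  rw [← h2, mul_sum]
  refine Finset.sum_congr rfl fun j hj => ?_
  have hj' : j ≤ m := Nat.lt_succ_iff.mp (mem_range.mp hj)
  have hpow : (-1 : ℝ) ^ m * (-1 : ℝ) ^ (m - j) = (-1 : ℝ) ^ j := by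
    rw [← pow_add, (by omega : m + (m - j) = j + 2 * (m - j)), pow_add, pow_mul]
    norm_num
  rw [← mul_assoc, ← mul_assoc, hpow]

/-- Double-sum Gamma identity:
`∑_{i,j=0}^m (-1)^{i+j} C(m,i) C(m,j) Γ(k+i+j)/(Γ(k+i)Γ(k+j)) = Γ(m+1)/Γ(k+m)`. -/
theorem stmt3 (k m : ℕ) (hk : 1 ≤ k) :
    ∑ i ∈ Finset.range (m + 1), ∑ j ∈ Finset.range (m + 1),
        (-1 : ℝ) ^ (i + j) * (m.choose i : ℝ) * (m.choose j : ℝ) *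
          (Real.Gamma ((k : ℝ) + i + j) /
            (Real.Gamma ((k : ℝ) + i) * Real.Gamma ((k : ℝ) + j)))
      = Real.Gamma ((m : ℝ) + 1) / Real.Gamma ((k : ℝ) + m) := by
  obtain ⟨n, rfl⟩ : ∃ n, k = n + 1 := ⟨k - 1, by omega⟩
  have hstep : ∑ i ∈ Finset.range (m + 1), ∑ j ∈ Finset.range (m + 1),
        (-1 : ℝ) ^ (i + j) * (m.choose i : ℝ) * (m.choose j : ℝ) *
          (Real.Gamma ((↑(n+1) : ℝ) + i + j) /
            (Real.Gamma ((↑(n+1) : ℝ) + i) * Real.Gamma ((↑(n+1) : ℝ) + j)))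
      = ∑ i ∈ Finset.range (m + 1),
          ((-1 : ℝ) ^ i * (m.choose i : ℝ) * (i ! : ℝ) / ((n + i)! : ℝ)) *
            ((-1 : ℝ) ^ m * (if m ≤ i then (((n + i).choose (i - m) : ℕ) : ℝ) else 0)) := by
    refine Finset.sum_congr rfl fun i _ => ?_
    rw [← key_real m (n + i) i, Finset.mul_sum]
    refine Finset.sum_congr rfl fun j _ => ?_
    have e1 : Real.Gamma ((↑(n+1) : ℝ) + i + j) = ((n + i + j)! : ℝ) := by
      rw [show ((n+1 : ℕ) : ℝ) + i + j = ((n + i + j : ℕ) : ℝ) + 1 by push_cast; ring,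
        Real.Gamma_nat_eq_factorial]
    have e2 : Real.Gamma ((↑(n+1) : ℝ) + i) = ((n + i)! : ℝ) := by
      rw [show ((n+1 : ℕ) : ℝ) + i = ((n + i : ℕ) : ℝ) + 1 by push_cast; ring,
        Real.Gamma_nat_eq_factorial]
    have e3 : Real.Gamma ((↑(n+1) : ℝ) + j) = ((n + j)! : ℝ) := by
      rw [show ((n+1 : ℕ) : ℝ) + j = ((n + j : ℕ) : ℝ) + 1 by push_cast; ring,
        Real.Gamma_nat_eq_factorial]
    rw [e1, e2, e3]
    have hch : ((n + i + j)! : ℝ) = ((n + i + j).choose i : ℝ) * (i ! : ℝ) * ((n + j)! : ℝ) := by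
      have h := Nat.choose_mul_factorial_mul_factorial (show i ≤ n + i + j by omega)
      rw [show n + i + j - i = n + j from by omega] at h
      exact_mod_cast h.symm
    have hne1 : ((n + i)! : ℝ) ≠ 0 := Nat.cast_ne_zero.mpr (Nat.factorial_ne_zero _)
    have hne2 : ((n + j)! : ℝ) ≠ 0 := Nat.cast_ne_zero.mpr (Nat.factorial_ne_zero _)
    rw [hch, pow_add]
    field_simp
  rw [hstep, Finset.sum_eq_single_of_mem m (self_mem_range_succ m)]
  · rw [if_pos le_rfl, Nat.sub_self, Nat.choose_zero_right, Nat.choose_self]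
    have e4 : Real.Gamma ((m : ℝ) + 1) = (m ! : ℝ) := Real.Gamma_nat_eq_factorial m
    have e5 : Real.Gamma ((↑(n+1) : ℝ) + m) = ((n + m)! : ℝ) := by
      rw [show ((n+1 : ℕ) : ℝ) + m = ((n + m : ℕ) : ℝ) + 1 by push_cast; ring,
        Real.Gamma_nat_eq_factorial]
    rw [e4, e5]
    have hsq : (-1 : ℝ) ^ m * (-1 : ℝ) ^ m = 1 := by
      rw [← pow_add]; exact Even.neg_one_pow ⟨m, rfl⟩
    have hfin : (-1 : ℝ) ^ m * 1 * (m ! : ℝ) / ((n + m)! : ℝ) * ((-1 : ℝ) ^ m * 1)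
        = ((-1 : ℝ) ^ m * (-1 : ℝ) ^ m) * ((m ! : ℝ) / ((n + m)! : ℝ)) := by ring
    push_cast
    rw [hfin, hsq, one_mul]
  · intro i hi hne
    have hi' := mem_range.mp hi
    rw [if_neg (by omega : ¬ m ≤ i), mul_zero, mul_zero]
end

section
/- For a complex number z with \(|\arg z| < \pi\) and complex numbers \(\alpha, \beta\) with \(0 < \mathrm{Re}(\beta) < \mathrm{Re}(\alpha)\), we have \(\int_0^{\infty} \frac{t^{\beta}}{(t+z)^{\alpha}} \frac{dt}{t} = z^{\beta-\alpha} \cdot \frac{\Gamma(\alpha-\beta)\Gamma(\beta)}{\Gamma(\alpha)}\). -/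
/-!
For real `z = x > 0` the substitution `t = x u` reduces the integral to `z = 1`, and there the
substitution `u = (1 + t)⁻¹` turns it into the Beta integral `B(α - β, β)`. Both sides are
holomorphic in `z` on the slit plane (the left side by differentiation under the integral sign,
dominated thanks to `‖t + z‖ ≥ c (1 + t)` locally uniformly in `z`), so they agree everywhere by
the identity theorem.
-/

open Complex MeasureTheory Set Filter Topology Real

lemma integrableOn_Ioi_rpow_mul_one_add_rpow {a b : ℝ} (ha : -1 < a) (hab : a + b < -1) :
    IntegrableOn (fun t : ℝ => t ^ a * (1 + t) ^ b) (Ioi 0) := by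
  have hb : b < 0 := by linarith
  have hcont : ContinuousOn (fun t : ℝ => t ^ a * (1 + t) ^ b) (Ioi 0) := by
    intro t (ht : 0 < t)
    have h1t : 1 + t ≠ 0 := by positivity
    exact ((continuousAt_rpow_const _ _ (.inl ht.ne')).mul
      ((continuousAt_const.add continuousAt_id).rpow_const (.inl h1t))).continuousWithinAt
  have hnear : IntegrableOn (fun t : ℝ => t ^ a * (1 + t) ^ b) (Ioc 0 1) := by
    have hdom : IntegrableOn (fun t : ℝ => t ^ a) (Ioc 0 1) :=
      (intervalIntegrable_iff_integrableOn_Ioc_of_le zero_le_one).1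
        (intervalIntegral.intervalIntegrable_rpow' ha)
    refine hdom.mono' ((hcont.mono Ioc_subset_Ioi_self).aestronglyMeasurable measurableSet_Ioc) ?_
    filter_upwards [ae_restrict_mem measurableSet_Ioc] with t ht
    have ht : 0 < t := ht.1
    rw [norm_of_nonneg (by positivity)]
    exact mul_le_of_le_one_right (by positivity)
      (rpow_le_one_of_one_le_of_nonpos (by linarith) hb.le)
  have hfar : IntegrableOn (fun t : ℝ => t ^ a * (1 + t) ^ b) (Ioi 1) := by
    refine (integrableOn_Ioi_rpow_of_lt hab one_pos).mono'
      ((hcont.mono (Ioi_subset_Ioi zero_le_one)).aestronglyMeasurable measurableSet_Ioi) ?_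
    filter_upwards [ae_restrict_mem measurableSet_Ioi] with t (ht : 1 < t)
    rw [norm_of_nonneg (by positivity), rpow_add (by linarith)]
    exact mul_le_mul_of_nonneg_left (rpow_le_rpow_of_nonpos (by linarith) (by linarith) hb.le)
      (by positivity)
  rw [← Ioc_union_Ioi_eq_Ioi zero_le_one]
  exact hnear.union hfar

lemma ofReal_add_mem_slitPlane {t : ℝ} (ht : 0 ≤ t) {z : ℂ} (hz : z ∈ slitPlane) :
    (t : ℂ) + z ∈ slitPlane := by
  rw [mem_slitPlane_iff] at hz ⊢
  rcases hz with h | h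
  · left; simp only [add_re, ofReal_re]; linarith
  · right; simpa using h

/-- Writing `t + z = (1 + t) ((1 - s) z + s)` with `s = t / (1 + t) ∈ [0, 1]`, the bound follows
from compactness of `[0, 1] × K` and star-convexity of the slit plane about `1`. -/
lemma exists_pos_mul_one_add_le_norm_ofReal_add {K : Set ℂ} (hK : IsCompact K)
    (hKs : K ⊆ slitPlane) :
    ∃ c > 0, ∀ z ∈ K, ∀ t : ℝ, 0 ≤ t → c * (1 + t) ≤ ‖(t : ℂ) + z‖ := by
  have hpos : ∀ p ∈ Icc (0 : ℝ) 1 ×ˢ K, 0 < ‖(1 - p.1 : ℂ) * p.2 + p.1‖ := by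
    rintro ⟨s, z⟩ ⟨⟨hs₀, hs₁⟩, hz⟩
    have := starConvex_one_slitPlane (hKs hz) hs₀ (sub_nonneg.2 hs₁) (add_sub_cancel s 1)
    refine norm_pos_iff.2 (slitPlane_ne_zero ?_)
    convert this using 1
    simp only [real_smul, mul_one, ofReal_sub, ofReal_one]
    ring
  obtain ⟨c, hc, hcle⟩ := (isCompact_Icc.prod hK).exists_forall_le' (by fun_prop) hpos
  refine ⟨c, hc, fun z hz t ht => ?_⟩
  have h1t : (0 : ℝ) < 1 + t := by linarith
  have hs : t / (1 + t) ∈ Icc (0 : ℝ) 1 :=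
    ⟨by positivity, (div_le_one h1t).2 (by linarith)⟩
  have hdecomp : (t : ℂ) + z
      = ((1 + t : ℝ) : ℂ) * ((1 - (t / (1 + t) : ℝ) : ℂ) * z + (t / (1 + t) : ℝ)) := by
    have : ((1 + t : ℝ) : ℂ) ≠ 0 := ofReal_ne_zero.2 h1t.ne'
    push_cast at this ⊢
    field_simp
    ring
  rw [hdecomp, norm_mul, norm_real, norm_of_nonneg h1t.le, mul_comm]
  exact mul_le_mul_of_nonneg_left (hcle (_, z) ⟨hs, hz⟩) h1t.le

lemma norm_cpow_le_of_le_norm {x w : ℂ} {r : ℝ} (hr : 0 < r) (hrx : r ≤ ‖x‖) (hw : w.re ≤ 0) :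
    ‖x ^ w‖ ≤ r ^ w.re * Real.exp (π * |w.im|) := by
  have hx : x ≠ 0 := norm_pos_iff.1 (hr.trans_le hrx)
  rw [norm_cpow_of_ne_zero hx, div_eq_mul_inv, ← Real.exp_neg]
  refine mul_le_mul (rpow_le_rpow_of_nonpos hr hrx hw) (Real.exp_le_exp.2 ?_) (by positivity)
    (by positivity)
  calc -(x.arg * w.im) ≤ |x.arg| * |w.im| := by rw [← abs_mul]; exact neg_le_abs _
    _ ≤ π * |w.im| := by gcongr; exact abs_arg_le_pi x

section Holomorphy

variable {s w : ℂ}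

lemma continuousOn_cpow_mul_ofReal_add_cpow {z : ℂ} (hz : z ∈ slitPlane) :
    ContinuousOn (fun t : ℝ => (t : ℂ) ^ s * ((t : ℂ) + z) ^ w) (Ioi 0) := by
  intro t (ht : 0 < t)
  exact ((continuous_ofReal.continuousAt.cpow continuousAt_const (ofReal_mem_slitPlane.2 ht)).mul
    ((continuous_ofReal.continuousAt.add continuousAt_const).cpow continuousAt_const
      (ofReal_add_mem_slitPlane ht.le hz))).continuousWithinAt

lemma norm_cpow_mul_ofReal_add_cpow_le {c t : ℝ} {z : ℂ} (hc : 0 < c) (ht : 0 < t)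
    (hw : w.re ≤ 0) (hz : c * (1 + t) ≤ ‖(t : ℂ) + z‖) :
    ‖(t : ℂ) ^ s * ((t : ℂ) + z) ^ w‖
      ≤ c ^ w.re * Real.exp (π * |w.im|) * (t ^ s.re * (1 + t) ^ w.re) := by
  have h1t : 0 < 1 + t := by linarith
  rw [norm_mul, norm_cpow_eq_rpow_re_of_pos ht]
  calc t ^ s.re * ‖((t : ℂ) + z) ^ w‖
      ≤ t ^ s.re * ((c * (1 + t)) ^ w.re * Real.exp (π * |w.im|)) := by
        gcongr
        exact norm_cpow_le_of_le_norm (by positivity) hz hw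
    _ = c ^ w.re * Real.exp (π * |w.im|) * (t ^ s.re * (1 + t) ^ w.re) := by
        rw [mul_rpow hc.le h1t.le]; ring

theorem differentiableOn_integral_cpow_mul_ofReal_add_cpow (hs : -1 < s.re)
    (hsw : s.re + w.re < -1) :
    DifferentiableOn ℂ (fun z => ∫ t in Ioi (0 : ℝ), (t : ℂ) ^ s * ((t : ℂ) + z) ^ w)
      slitPlane := by
  intro z₀ hz₀
  obtain ⟨ε, hε, hball⟩ := Metric.nhds_basis_closedBall.mem_iff.1 (isOpen_slitPlane.mem_nhds hz₀)
  obtain ⟨c, hc, hlow⟩ :=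
    exists_pos_mul_one_add_le_norm_ofReal_add (isCompact_closedBall z₀ ε) hball
  set F : ℂ → ℝ → ℂ := fun z t => (t : ℂ) ^ s * ((t : ℂ) + z) ^ w
  set F' : ℂ → ℝ → ℂ := fun z t => w * ((t : ℂ) ^ s * ((t : ℂ) + z) ^ (w - 1))
  have hmeas : ∀ (v z : ℂ), z ∈ slitPlane → AEStronglyMeasurable
      (fun t : ℝ => (t : ℂ) ^ s * ((t : ℂ) + z) ^ v) (volume.restrict (Ioi 0)) := fun v z hz =>
    (continuousOn_cpow_mul_ofReal_add_cpow hz).aestronglyMeasurable measurableSet_Ioi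
  have hint : Integrable (F z₀) (volume.restrict (Ioi 0)) := by
    refine ((integrableOn_Ioi_rpow_mul_one_add_rpow hs (by simpa using hsw)).const_mul
      (c ^ w.re * Real.exp (π * |w.im|))).mono' (hmeas w z₀ hz₀) ?_
    filter_upwards [ae_restrict_mem measurableSet_Ioi] with t (ht : 0 < t)
    exact norm_cpow_mul_ofReal_add_cpow_le hc ht (by linarith)
      (hlow z₀ (Metric.mem_closedBall_self hε.le) t ht.le)
  have hbound : ∀ᵐ t ∂(volume.restrict (Ioi 0)), ∀ z ∈ Metric.closedBall z₀ ε,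
      ‖F' z t‖ ≤ ‖w‖ * (c ^ (w - 1).re * Real.exp (π * |(w - 1).im|) *
        (t ^ s.re * (1 + t) ^ (w - 1).re)) := by
    filter_upwards [ae_restrict_mem measurableSet_Ioi] with t (ht : 0 < t) z hz
    rw [norm_mul]
    gcongr
    exact norm_cpow_mul_ofReal_add_cpow_le hc ht (by simp; linarith) (hlow z hz t ht.le)
  have hderiv : ∀ᵐ t ∂(volume.restrict (Ioi 0)), ∀ z ∈ Metric.closedBall z₀ ε,
      HasDerivAt (F · t) (F' z t) z := by
    filter_upwards [ae_restrict_mem measurableSet_Ioi] with t (ht : 0 < t) z hz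
    have := (((hasDerivAt_id' z).const_add (t : ℂ)).cpow_const (c := w)
      (ofReal_add_mem_slitPlane ht.le (hball hz))).const_mul ((t : ℂ) ^ s)
    simpa only [F, F', mul_one, mul_left_comm] using this
  exact (hasDerivAt_integral_of_dominated_loc_of_deriv_le (Metric.closedBall_mem_nhds z₀ hε)
    (eventually_of_mem (Metric.closedBall_mem_nhds z₀ hε) fun z hz => hmeas w z (hball hz)) hint
    ((hmeas (w - 1) z₀ hz₀).const_mul w) hbound
    (((integrableOn_Ioi_rpow_mul_one_add_rpow hs (by simp; linarith)).const_mul _).const_mul _)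
    hderiv).2.differentiableAt.differentiableWithinAt

end Holomorphy

lemma integral_cpow_mul_ofReal_add_cpow_scale (s w : ℂ) {x : ℝ} (hx : 0 < x) :
    ∫ t in Ioi (0 : ℝ), (t : ℂ) ^ s * ((t : ℂ) + x) ^ w
      = (x : ℂ) ^ (s + w + 1) * ∫ t in Ioi (0 : ℝ), (t : ℂ) ^ s * ((t : ℂ) + 1) ^ w := by
  have hxC : (x : ℂ) ≠ 0 := ofReal_ne_zero.2 hx.ne'
  have hscale : ∀ u ∈ Ioi (0 : ℝ), ((x * u : ℝ) : ℂ) ^ s * (((x * u : ℝ) : ℂ) + x) ^ w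
      = (x : ℂ) ^ s * (x : ℂ) ^ w * ((u : ℂ) ^ s * ((u : ℂ) + 1) ^ w) := by
    intro u (hu : 0 < u)
    have hsum : ((x * u : ℝ) : ℂ) + x = ((x * (u + 1) : ℝ) : ℂ) := by push_cast; ring
    rw [hsum, ofReal_mul, ofReal_mul, mul_cpow_ofReal_nonneg hx.le hu.le,
      mul_cpow_ofReal_nonneg hx.le (by linarith)]
    push_cast
    ring
  have hsub := integral_comp_mul_left_Ioi' (fun t : ℝ => (t : ℂ) ^ s * ((t : ℂ) + x) ^ w) 0 hx
  rw [mul_zero] at hsub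
  rw [← hsub, setIntegral_congr_fun measurableSet_Ioi hscale,
    integral_const_mul, real_smul, cpow_add _ _ hxC, cpow_add _ _ hxC, cpow_one]
  ring

lemma abs_deriv_smul_betaIntegrand_comp_inv_one_add (α β : ℂ) {t : ℝ} (ht : 0 < t) :
    |-1 / (1 + t) ^ 2|
        • ((((1 + t)⁻¹ : ℝ) : ℂ) ^ (α - β - 1) * (1 - (((1 + t)⁻¹ : ℝ) : ℂ)) ^ (β - 1))
      = (t : ℂ) ^ (β - 1) * ((t : ℂ) + 1) ^ (-α) := by
  have h1t : 0 < 1 + t := by linarith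
  set v : ℝ := (1 + t)⁻¹
  have hv : 0 < v := inv_pos.2 h1t
  have hvC : (v : ℂ) ≠ 0 := ofReal_ne_zero.2 hv.ne'
  have habs : |-1 / (1 + t) ^ 2| = v ^ 2 := by
    rw [neg_div, abs_neg, abs_of_pos (by positivity), one_div, inv_pow]
  have hcompl : 1 - (v : ℂ) = ((t * v : ℝ) : ℂ) := by
    have : (1 : ℂ) + t ≠ 0 := by exact_mod_cast h1t.ne'
    push_cast [v]
    field_simp
    ring
  have hpow : ((t : ℂ) + 1) ^ (-α) = (v : ℂ) ^ α := by
    have hvt : (v : ℂ) = ((1 + t : ℝ) : ℂ)⁻¹ := ofReal_inv _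
    rw [hvt, inv_cpow _ _ (by rw [arg_ofReal_of_nonneg h1t.le]; exact pi_ne_zero.symm),
      ← cpow_neg, add_comm]
    push_cast
    rfl
  have hsplit : (v : ℂ) ^ α = (v : ℂ) ^ 2 * (v : ℂ) ^ (α - β - 1) * (v : ℂ) ^ (β - 1) := by
    rw [← cpow_ofNat, ← cpow_add _ _ hvC, ← cpow_add _ _ hvC]
    ring_nf
  rw [hpow, hsplit, habs, hcompl, ofReal_mul, mul_cpow_ofReal_nonneg ht.le hv.le, real_smul]
  push_cast
  ring

theorem integral_cpow_mul_ofReal_add_one_cpow {α β : ℂ} (hβ : 0 < β.re) (hβα : β.re < α.re) :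
    ∫ t in Ioi (0 : ℝ), (t : ℂ) ^ (β - 1) * ((t : ℂ) + 1) ^ (-α)
      = Gamma (α - β) * Gamma β / Gamma α := by
  set g : ℝ → ℂ := fun x => (x : ℂ) ^ (α - β - 1) * (1 - (x : ℂ)) ^ (β - 1)
  have himage : (fun t : ℝ => (1 + t)⁻¹) '' Ioi 0 = Ioo 0 1 := by
    ext x
    constructor
    · rintro ⟨t, ht : 0 < t, rfl⟩
      exact ⟨by positivity, inv_lt_one_of_one_lt₀ (by linarith)⟩
    · rintro ⟨hx₀, hx₁⟩
      exact ⟨x⁻¹ - 1, sub_pos.2 (one_lt_inv₀ hx₀ |>.2 hx₁), by simp⟩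
  have hderiv : ∀ t ∈ Ioi (0 : ℝ),
      HasDerivWithinAt (fun t : ℝ => (1 + t)⁻¹) (-1 / (1 + t) ^ 2) (Ioi 0) t := by
    intro t (ht : 0 < t)
    exact (((hasDerivAt_id t).const_add 1).inv (by positivity)).hasDerivWithinAt
  have hinj : InjOn (fun t : ℝ => (1 + t)⁻¹) (Ioi 0) := fun a _ b _ hab => by
    simpa using inv_injective hab
  have hsubst : ∀ t ∈ Ioi (0 : ℝ), |-1 / (1 + t) ^ 2| • g (1 + t)⁻¹
      = (t : ℂ) ^ (β - 1) * ((t : ℂ) + 1) ^ (-α) := fun t ht =>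
    abs_deriv_smul_betaIntegrand_comp_inv_one_add α β ht
  have hbeta : betaIntegral (α - β) β = ∫ x in Ioo (0 : ℝ) 1, g x := by
    rw [betaIntegral, intervalIntegral.integral_of_le zero_le_one, integral_Ioc_eq_integral_Ioo]
  rw [← setIntegral_congr_fun measurableSet_Ioi hsubst,
    ← integral_image_eq_integral_abs_deriv_smul measurableSet_Ioi hderiv hinj g, himage, ← hbeta,
    betaIntegral_eq_Gamma_mul_div _ _ (by simpa using hβα) hβ, sub_add_cancel]

lemma eqOn_slitPlane_of_eq_ofReal_of_pos {f g : ℂ → ℂ} (hf : DifferentiableOn ℂ f slitPlane)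
    (hg : DifferentiableOn ℂ g slitPlane) (hfg : ∀ x : ℝ, 0 < x → f x = g x) :
    EqOn f g slitPlane := by
  have hreal : Tendsto ((↑) : ℝ → ℂ) (𝓝[≠] 1) (𝓝[≠] 1) := by
    refine tendsto_nhdsWithin_of_tendsto_nhds_of_eventually_within _ ?_ ?_
    · simpa using continuous_ofReal.continuousWithinAt.tendsto (x := (1 : ℝ)) (s := {1}ᶜ)
    · filter_upwards [self_mem_nhdsWithin] with x (hx : x ≠ 1)
      exact mt ofReal_eq_one.1 hx
  have hfreq : ∃ᶠ w in 𝓝[≠] (1 : ℂ), f w = g w :=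
    hreal.frequently <| (eventually_nhdsWithin_of_eventually_nhds
      (lt_mem_nhds one_pos)).mono hfg |>.frequently
  exact (hf.analyticOnNhd isOpen_slitPlane).eqOn_of_preconnected_of_frequently_eq
    (hg.analyticOnNhd isOpen_slitPlane)
    (starConvex_one_slitPlane.isPathConnected one_mem_slitPlane).isConnected.isPreconnected
    one_mem_slitPlane hfreq

/-- Beta-type integral: for `|arg z| < π` and `0 < Re β < Re α`,
`∫_0^∞ t^β/(t+z)^α dt/t = z^{β-α} Γ(α-β)Γ(β)/Γ(α)`. -/
theorem stmt4 (z α β : ℂ) (hz : z ≠ 0) (harg : Complex.arg z ≠ Real.pi)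
    (hβ : 0 < β.re) (hβα : β.re < α.re) :
    ∫ t in Set.Ioi (0 : ℝ), ((t : ℂ) ^ β / ((t : ℂ) + z) ^ α) / (t : ℂ)
      = z ^ (β - α) * (Complex.Gamma (α - β) * Complex.Gamma β / Complex.Gamma α) := by
  have hintegrand : ∀ t ∈ Ioi (0 : ℝ), ((t : ℂ) ^ β / ((t : ℂ) + z) ^ α) / (t : ℂ)
      = (t : ℂ) ^ (β - 1) * ((t : ℂ) + z) ^ (-α) := fun t (ht : 0 < t) => by
    rw [cpow_sub _ _ (ofReal_ne_zero.2 ht.ne'), cpow_one, cpow_neg]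
    ring
  have hholo := differentiableOn_integral_cpow_mul_ofReal_add_cpow (s := β - 1) (w := -α)
    (by simpa using hβ) (by simpa using hβα)
  have hpower : DifferentiableOn ℂ
      (fun w => w ^ (β - α) * (Gamma (α - β) * Gamma β / Gamma α)) slitPlane :=
    fun w hw => ((differentiableAt_id.cpow_const hw).mul_const _).differentiableWithinAt
  have hpos : ∀ x : ℝ, 0 < x →
      ∫ t in Ioi (0 : ℝ), (t : ℂ) ^ (β - 1) * ((t : ℂ) + x) ^ (-α)
        = (x : ℂ) ^ (β - α) * (Gamma (α - β) * Gamma β / Gamma α) := fun x hx => by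
    rw [integral_cpow_mul_ofReal_add_cpow_scale _ _ hx,
      integral_cpow_mul_ofReal_add_one_cpow hβ hβα, show β - 1 + -α + 1 = β - α by ring]
  rw [setIntegral_congr_fun measurableSet_Ioi hintegrand]
  exact eqOn_slitPlane_of_eq_ofReal_of_pos hholo hpower hpos (mem_slitPlane_iff_arg.2 ⟨harg, hz⟩)
end

section
/- Let k be a positive integer and m a nonnegative integer. Define functions \(W^m: \mathbb{R}_{>0} \to \mathbb{R}\) recursively by \(W^0(a) = a^{k/2}e^{-2\pi a}\) and \(W^{m+1}(a) = 2a\frac{d}{da}W^m(a) + (k+2m-4\pi a)W^m(a)\). Then \(W^m(a) = 2^m e^{-2\pi a}\sum_{j=0}^{m}(-4\pi)^j\binom{m}{j}\frac{\Gamma(k+m)}{\Gamma(k+j)}a^{k/2+j}\). -/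
/-!
Both sides satisfy the same recursion. On the functions `a ^ (s / 2 + j) * exp (-2πa)` the
raising operator `2a d/da + (s + 2m - 4πa)` acts by multiplication with `2 (s + m + j) - 8πa`, so it
maps the closed form for `m` to the closed form for `m + 1` as soon as the coefficients satisfy
`c (m+1) (j+1) = (s + m + j + 1) c m (j+1) - 4π c m j`; for the Gamma quotients this is Pascal's rule
combined with `Γ(x + 1) = x Γ(x)` and `(j + 1) C(m, j+1) = (m - j) C(m, j)`.
-/

open Finset

theorem Nat.cast_choose_succ_right_mul {R : Type*} [CommRing R] (n k : ℕ) :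
    (n.choose (k + 1) : R) * (k + 1) = n.choose k * (n - k) := by
  rcases le_or_gt k n with hkn | hnk
  · have h := congrArg (Nat.cast (R := R)) (Nat.choose_succ_right_eq n k)
    push_cast [hkn] at h
    exact h
  · simp [Nat.choose_eq_zero_of_lt hnk, Nat.choose_eq_zero_of_lt (hnk.trans k.lt_succ_self)]

namespace Whittaker

noncomputable def coeff (s : ℝ) (m j : ℕ) : ℝ :=
  (-4 * Real.pi) ^ j * (m.choose j : ℝ) * (Real.Gamma (s + m) / Real.Gamma (s + j))

noncomputable def closedForm (s : ℝ) (m : ℕ) (a : ℝ) : ℝ :=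
  2 ^ m * Real.exp (-2 * Real.pi * a) * ∑ j ∈ range (m + 1), coeff s m j * a ^ (s / 2 + j)

variable {s : ℝ}

theorem coeff_of_lt {m j : ℕ} (h : m < j) : coeff s m j = 0 := by
  simp [coeff, Nat.choose_eq_zero_of_lt h]

theorem coeff_zero_zero (hs : 0 < s) : coeff s 0 0 = 1 := by
  simp [coeff, (Real.Gamma_pos_of_pos hs).ne']

theorem coeff_succ_zero (hs : 0 < s) (m : ℕ) : coeff s (m + 1) 0 = (s + m) * coeff s m 0 := by
  have hm : 0 < s + m := by positivity
  simp only [coeff, pow_zero, Nat.choose_zero_right, Nat.cast_zero, add_zero, Nat.cast_succ,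
    ← add_assoc, Real.Gamma_add_one hm.ne']
  ring

theorem coeff_succ_succ (hs : 0 < s) (m j : ℕ) :
    coeff s (m + 1) (j + 1) = (s + m + j + 1) * coeff s m (j + 1) - 4 * Real.pi * coeff s m j := by
  have hm : 0 < s + m := by positivity
  have hj : 0 < s + j := by positivity
  simp only [coeff, Nat.choose_succ_succ', Nat.cast_add, Nat.cast_succ, ← add_assoc,
    Real.Gamma_add_one hm.ne', Real.Gamma_add_one hj.ne']
  have hGj := (Real.Gamma_pos_of_pos hj).ne'
  field_simp
  linear_combination -(-(4 * Real.pi)) ^ (j + 1) * Nat.cast_choose_succ_right_mul (R := ℝ) m j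

theorem sum_coeff_succ (hs : 0 < s) (m : ℕ) (x : ℕ → ℝ) :
    ∑ j ∈ range (m + 2), coeff s (m + 1) j * x j =
      ∑ j ∈ range (m + 1), coeff s m j * ((s + m + j) * x j - 4 * Real.pi * x (j + 1)) := by
  set A : ℕ → ℝ := fun j ↦ coeff s m j * ((s + m + j) * x j)
  have hA : ∑ j ∈ range (m + 1), A (j + 1) + A 0 = ∑ j ∈ range (m + 1), A j := by
    rw [← sum_range_succ', sum_range_succ, add_eq_left]
    exact mul_eq_zero_of_left (coeff_of_lt m.lt_succ_self) _
  simp only [sum_range_succ' _ (m + 1), coeff_succ_zero hs, coeff_succ_succ hs, mul_sub,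
    sum_sub_distrib]
  rw [← hA]
  simp only [A, Nat.cast_add, Nat.cast_one, Nat.cast_zero, add_zero]
  rw [add_sub_right_comm, ← sum_sub_distrib]
  congr 1
  · exact sum_congr rfl fun j _ ↦ by ring
  · ring

theorem hasDerivAt_rpow_mul_exp (p b : ℝ) {a : ℝ} (ha : a ≠ 0) :
    HasDerivAt (fun x ↦ x ^ p * Real.exp (b * x)) ((p / a + b) * (a ^ p * Real.exp (b * a))) a := by
  have hexp : HasDerivAt (fun x ↦ Real.exp (b * x)) (Real.exp (b * a) * b) a := by
    simpa using ((hasDerivAt_id a).const_mul b).exp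
  refine ((Real.hasDerivAt_rpow_const (p := p) (Or.inl ha)).mul hexp).congr_deriv ?_
  rw [Real.rpow_sub_one ha]
  field_simp

theorem closedForm_eq_sum (m : ℕ) (a : ℝ) :
    closedForm s m a =
      2 ^ m * ∑ j ∈ range (m + 1), coeff s m j * (a ^ (s / 2 + j) * Real.exp (-2 * Real.pi * a)) := by
  simp only [closedForm, mul_assoc, mul_sum]
  exact sum_congr rfl fun j _ ↦ by ring

theorem hasDerivAt_closedForm (m : ℕ) {a : ℝ} (ha : a ≠ 0) :
    HasDerivAt (closedForm s m)
      (2 ^ m * ∑ j ∈ range (m + 1), coeff s m j *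
        (((s / 2 + j) / a + -2 * Real.pi) * (a ^ (s / 2 + j) * Real.exp (-2 * Real.pi * a)))) a := by
  rw [funext (closedForm_eq_sum m)]
  exact (HasDerivAt.fun_sum fun j _ ↦
    (hasDerivAt_rpow_mul_exp _ _ ha).const_mul (coeff s m j)).const_mul _

theorem closedForm_succ (hs : 0 < s) (m : ℕ) {a : ℝ} (ha : 0 < a) :
    closedForm s (m + 1) a =
      2 * a * deriv (closedForm s m) a + (s + 2 * m - 4 * Real.pi * a) * closedForm s m a := by
  rw [(hasDerivAt_closedForm m ha.ne').deriv, closedForm_eq_sum, closedForm_eq_sum,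
    sum_coeff_succ hs]
  simp only [Nat.cast_succ, ← add_assoc, Real.rpow_add_one ha.ne', mul_sum, ← sum_add_distrib]
  refine sum_congr rfl fun j _ ↦ ?_
  field_simp
  ring

end Whittaker

/-- Explicit formula for the repeatedly weight-raised Whittaker function. -/
theorem stmt6 (k : ℕ) (hk : 1 ≤ k) (W : ℕ → ℝ → ℝ)
    (hW0 : ∀ a : ℝ, 0 < a → W 0 a = a ^ ((k : ℝ) / 2) * Real.exp (-2 * Real.pi * a))
    (hWrec : ∀ m : ℕ, ∀ a : ℝ, 0 < a →
      W (m + 1) a = 2 * a * deriv (W m) a + ((k : ℝ) + 2 * m - 4 * Real.pi * a) * W m a) :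
    ∀ m : ℕ, ∀ a : ℝ, 0 < a →
      W m a = 2 ^ m * Real.exp (-2 * Real.pi * a) *
        ∑ j ∈ Finset.range (m + 1),
          (-4 * Real.pi) ^ j * (m.choose j : ℝ) *
            (Real.Gamma ((k : ℝ) + m) / Real.Gamma ((k : ℝ) + j)) *
            a ^ ((k : ℝ) / 2 + j) := by
  have hk : (0 : ℝ) < k := by exact_mod_cast hk
  show ∀ m a, 0 < a → W m a = Whittaker.closedForm k m a
  intro m
  induction m with
  | zero =>
    intro a ha
    simp [hW0 a ha, Whittaker.closedForm, Whittaker.coeff_zero_zero hk, mul_comm]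
  | succ m ih =>
    intro a ha
    have hWm : W m =ᶠ[nhds a] Whittaker.closedForm k m :=
      Filter.eventually_of_mem (Ioi_mem_nhds ha) ih
    rw [hWrec m a ha, hWm.deriv_eq, ih a ha, Whittaker.closedForm_succ hk m ha]
end

section
/- Let k be a positive integer, m a nonnegative integer, and for \(a \in \mathbb{R}_{>0}\) set \(P^m(a) = \sum_{j=0}^{m}(-4\pi)^j\binom{m}{j}\frac{\Gamma(k+m)}{\Gamma(k+j)}a^{k/2+j}\). Then \(\int_0^{\infty} 2^{2m}P^m(a)P^m(a)e^{-4\pi a}\frac{da}{a} = 4^{-k+m}\pi^{-k}\Gamma(k+m)\Gamma(m+1)\). -/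
/-!
Expanding `P²` and integrating term by term with `∫₀^∞ a^(s-1) e^(-ra) da = Γ(s) r^(-s)` turns
the integral into `4^m Γ(k+m)² (4π)^(-k)` times
`∑ᵢⱼ (-1)^(i+j) C(m,i) C(m,j) Γ(k+i+j) / (Γ(k+i) Γ(k+j))`.
For fixed `j`, `Γ(k+i+j) / Γ(k+i)` is the rising factorial `(k+i)⁽ʲ⁾`, a polynomial of degree
`j` in `i`; its alternating binomial sum over `i` is an `m`-th forward difference, so it vanishes
unless `j = m`, where it equals `(-1)^m m!`. The double sum is therefore `m! / Γ(k+m)`.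
-/

open Finset MeasureTheory Polynomial Nat fwdDiff Real Set

theorem Polynomial.sum_range_neg_one_pow_mul_choose_mul_eval {R : Type*} [CommRing R]
    (P : R[X]) {m : ℕ} (hP : P.natDegree ≤ m) :
    ∑ i ∈ range (m + 1), (-1) ^ i * m.choose i * P.eval (i : R) =
      (-1) ^ m * m ! * P.coeff m := by
  have hdiff : Δ_[1] ^[m] P.eval 0 = m ! * P.coeff m := by
    rcases hP.lt_or_eq with hlt | rfl
    · simp [fwdDiff_iter_eq_zero_of_degree_lt hlt, coeff_eq_zero_of_natDegree_lt hlt]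
    · rw [fwdDiff_iter_degree_eq_factorial, Pi.smul_apply, Pi.natCast_apply, smul_eq_mul,
        mul_comm, leadingCoeff]
  rw [mul_assoc, ← hdiff, fwdDiff_iter_eq_sum_shift, mul_sum]
  refine sum_congr rfl fun i hi => ?_
  have hsign : (-1 : R) ^ i = (-1) ^ m * (-1) ^ (m - i) := by
    obtain ⟨j, rfl⟩ := Nat.exists_eq_add_of_le (mem_range_succ_iff.mp hi)
    rw [Nat.add_sub_cancel_left, pow_add, mul_assoc, ← pow_add, ← two_mul, pow_mul, neg_one_sq,
      one_pow, mul_one]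
  simp [hsign, zsmul_eq_mul, mul_assoc]

theorem sum_range_neg_one_pow_mul_choose_mul_ascPochhammer_eval {R : Type*} [CommRing R]
    [IsDomain R] (x : R) {j m : ℕ} (hjm : j ≤ m) :
    ∑ i ∈ range (m + 1), (-1) ^ i * m.choose i * (ascPochhammer R j).eval (x + i) =
      if j = m then (-1 : R) ^ m * m ! else 0 := by
  have hmonic : ((ascPochhammer R j).comp (X + C x)).Monic :=
    (monic_ascPochhammer R j).comp_X_add_C x
  have hdeg : ((ascPochhammer R j).comp (X + C x)).natDegree = j := by
    rw [natDegree_comp, ascPochhammer_natDegree, natDegree_X_add_C, mul_one]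
  have hcoeff := sum_range_neg_one_pow_mul_choose_mul_eval _ (hdeg.trans_le hjm)
  simp only [eval_comp, eval_add, eval_X, eval_C, add_comm _ x] at hcoeff
  rw [hcoeff]
  split_ifs with h
  · subst h
    have hlead : ((ascPochhammer R j).comp (X + C x)).coeff j = 1 := by
      simpa only [hdeg] using hmonic.coeff_natDegree
    rw [hlead, mul_one]
  · rw [coeff_eq_zero_of_natDegree_lt (by omega), mul_zero]

theorem Real.Gamma_add_nat_eq_mul_ascPochhammer_eval {x : ℝ} (hx : 0 < x) (n : ℕ) :
    Gamma (x + n) = Gamma x * (ascPochhammer ℝ n).eval x := by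
  induction n with
  | zero => simp
  | succ n ih =>
    rw [Nat.cast_succ, ← add_assoc, Gamma_add_one (by positivity), ih, ascPochhammer_succ_right,
      eval_mul, eval_add, eval_X, eval_natCast]
    ring

theorem Real.sum_sum_neg_one_pow_mul_choose_mul_choose_mul_Gamma_div {x : ℝ} (hx : 0 < x)
    (m : ℕ) :
    ∑ i ∈ range (m + 1), ∑ j ∈ range (m + 1), (-1) ^ (i + j) * m.choose i * m.choose j *
      (Gamma (x + i + j) / (Gamma (x + i) * Gamma (x + j))) = Gamma (m + 1) / Gamma (x + m) := by
  have hinner : ∀ j ∈ range (m + 1), ∑ i ∈ range (m + 1), (-1) ^ (i + j) * m.choose i *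
      m.choose j * (Gamma (x + i + j) / (Gamma (x + i) * Gamma (x + j))) =
      (-1) ^ j * m.choose j / Gamma (x + j) * if j = m then (-1 : ℝ) ^ m * m ! else 0 := by
    intro j hj
    rw [← sum_range_neg_one_pow_mul_choose_mul_ascPochhammer_eval x (mem_range_succ_iff.mp hj),
      mul_sum]
    refine sum_congr rfl fun i _ => ?_
    have hΓ : Gamma (x + i) ≠ 0 := (Gamma_pos_of_pos (by positivity)).ne'
    rw [Gamma_add_nat_eq_mul_ascPochhammer_eval (by positivity)]
    field_simp
    ring
  rw [sum_comm, sum_congr rfl hinner]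
  simp only [mul_ite, mul_zero, sum_ite_eq', Finset.mem_range, Nat.lt_succ_self, if_true]
  rw [Gamma_nat_eq_factorial, choose_self, Nat.cast_one, mul_one, div_mul_eq_mul_div,
    ← mul_assoc, ← mul_pow, neg_one_mul, neg_neg, one_pow, one_mul]

theorem integral_Ioi_sum_mul_rpow_mul_exp_neg_mul {ι : Type*} (t : Finset ι) (c s : ι → ℝ)
    {r : ℝ} (hs : ∀ i ∈ t, 0 < s i) (hr : 0 < r) :
    ∫ a in Ioi 0, ∑ i ∈ t, c i * (a ^ (s i - 1) * exp (-(r * a))) =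
      ∑ i ∈ t, c i * ((1 / r) ^ s i * Gamma (s i)) := by
  have hint : ∀ i ∈ t, IntegrableOn (fun a => a ^ (s i - 1) * exp (-(r * a))) (Ioi 0) := by
    intro i hi
    simpa only [rpow_one, neg_mul] using integrableOn_rpow_mul_exp_neg_mul_rpow (s := s i - 1)
      (by linarith [hs i hi]) zero_lt_one hr
  rw [integral_finsetSum _ fun i hi => (hint i hi).const_mul (c i)]
  refine sum_congr rfl fun i hi => ?_
  rw [integral_const_mul, integral_rpow_mul_exp_neg_mul_Ioi (hs i hi) hr]

theorem integral_Ioi_sq_sum_mul_rpow_mul_exp_neg_mul_div {ι : Type*} (t : Finset ι)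
    (c s : ι → ℝ) {r : ℝ} (hs : ∀ i ∈ t, 0 < s i) (hr : 0 < r) :
    ∫ a in Ioi 0, (∑ i ∈ t, c i * a ^ s i) ^ 2 * exp (-(r * a)) / a =
      ∑ i ∈ t, ∑ j ∈ t, c i * c j * ((1 / r) ^ (s i + s j) * Gamma (s i + s j)) := by
  have hpt : ∀ a ∈ Ioi (0 : ℝ), (∑ i ∈ t, c i * a ^ s i) ^ 2 * exp (-(r * a)) / a =
      ∑ p ∈ t ×ˢ t, c p.1 * c p.2 * (a ^ (s p.1 + s p.2 - 1) * exp (-(r * a))) := by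
    intro a ha
    rw [sq, sum_mul_sum, sum_product, sum_mul, sum_div]
    refine sum_congr rfl fun i _ => ?_
    rw [sum_mul, sum_div]
    refine sum_congr rfl fun j _ => ?_
    rw [rpow_sub_one ha.ne', rpow_add ha]
    ring
  rw [setIntegral_congr_fun measurableSet_Ioi hpt, integral_Ioi_sum_mul_rpow_mul_exp_neg_mul _ _ _
    (fun p hp => add_pos (hs _ (mem_product.mp hp).1) (hs _ (mem_product.mp hp).2)) hr,
    sum_product]

theorem integral_Ioi_two_pow_mul_sq_mul_exp_neg_div {k : ℝ} (hk : 0 < k) (m : ℕ) (P : ℝ → ℝ)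
    (hP : ∀ a, P a = ∑ j ∈ range (m + 1),
      (-4 * π) ^ j * m.choose j * (Gamma (k + m) / Gamma (k + j)) * a ^ (k / 2 + j)) :
    ∫ a in Ioi 0, 2 ^ (2 * m) * P a * P a * exp (-4 * π * a) / a =
      4 ^ ((m : ℝ) - k) * π ^ (-k) * Gamma (k + m) * Gamma (m + 1) := by
  set c : ℕ → ℝ := fun j => (-4 * π) ^ j * m.choose j * (Gamma (k + m) / Gamma (k + j))
  have h4π : (0 : ℝ) < 4 * π := by positivity
  have hintegrand : ∀ a, 2 ^ (2 * m) * P a * P a * exp (-4 * π * a) / a =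
      4 ^ m * ((∑ j ∈ range (m + 1), c j * a ^ (k / 2 + j)) ^ 2 * exp (-(4 * π * a)) / a) := by
    intro a
    have hPc : P a = ∑ j ∈ range (m + 1), c j * a ^ (k / 2 + j) := hP a
    rw [hPc, pow_mul, neg_mul, neg_mul, show (2 : ℝ) ^ 2 = 4 by norm_num]
    ring
  have hscaled : ∀ i : ℕ, c i * (1 / (4 * π)) ^ i =
      (-1) ^ i * m.choose i * (Gamma (k + m) / Gamma (k + i)) := by
    intro i
    have hsign : (-4 * π) ^ i * (1 / (4 * π)) ^ i = (-1) ^ i := by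
      rw [← mul_pow]
      congr 1
      field_simp
    simp only [c]
    linear_combination (m.choose i * (Gamma (k + m) / Gamma (k + i))) * hsign
  have hterm : ∀ i j : ℕ, c i * c j * ((1 / (4 * π)) ^ (k / 2 + i + (k / 2 + j)) *
      Gamma (k / 2 + i + (k / 2 + j))) = Gamma (k + m) ^ 2 * (1 / (4 * π)) ^ k *
        ((-1) ^ (i + j) * m.choose i * m.choose j *
          (Gamma (k + i + j) / (Gamma (k + i) * Gamma (k + j)))) := by
    intro i j
    rw [show k / 2 + i + (k / 2 + j) = k + i + j by ring, rpow_add (by positivity),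
      rpow_add (by positivity), rpow_natCast, rpow_natCast,
      show ∀ x y z w : ℝ, c i * c j * (x * y * z * w) = (c i * y) * (c j * z) * x * w from
        fun _ _ _ _ => by ring, hscaled, hscaled]
    ring
  simp_rw [hintegrand]
  rw [integral_const_mul, integral_Ioi_sq_sum_mul_rpow_mul_exp_neg_mul_div _ _ _
    (fun j _ => by positivity) h4π]
  simp_rw [hterm, ← mul_sum]
  rw [sum_sum_neg_one_pow_mul_choose_mul_choose_mul_Gamma_div hk]
  have hΓ : Gamma (k + m) ≠ 0 := (Gamma_pos_of_pos (by positivity)).ne'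
  rw [one_div, inv_rpow h4π.le, mul_rpow (by norm_num) pi_pos.le, rpow_sub (by norm_num),
    rpow_neg pi_pos.le, rpow_natCast]
  field_simp

/-- Norm of the weight `k+2m` vector:
`∫_0^∞ 2^{2m} P^m(a)² e^{-4πa} da/a = 4^{m-k} π^{-k} Γ(k+m) Γ(m+1)`. -/
theorem stmt7 (k m : ℕ) (hk : 1 ≤ k) (P : ℝ → ℝ)
    (hP : ∀ a : ℝ, P a = ∑ j ∈ Finset.range (m + 1),
        (-4 * Real.pi) ^ j * (m.choose j : ℝ) *
          (Real.Gamma ((k : ℝ) + m) / Real.Gamma ((k : ℝ) + j)) *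
          a ^ ((k : ℝ) / 2 + j)) :
    ∫ a in Set.Ioi (0 : ℝ), (2 : ℝ) ^ (2 * m) * P a * P a * Real.exp (-4 * Real.pi * a) / a
      = (4 : ℝ) ^ ((m : ℝ) - k) * Real.pi ^ (-(k : ℝ)) *
          Real.Gamma ((k : ℝ) + m) * Real.Gamma ((m : ℝ) + 1) :=
  integral_Ioi_two_pow_mul_sq_mul_exp_neg_div (Nat.cast_pos.mpr hk) m P hP
end

section
/- Let q > 1 be real and \(\chi', \chi \in \{\pm1\}\). Define \(\Phi'(n) = (\chi')^n q^{-2|n|}\) and \(\Phi''(n) = -(\chi')^n q^{-2|n-1|}\) (matrix coefficient values of an unramified special representation over the unramified quadratic extension, residue cardinality \(q^2\), restricted to the base field), and \(\Phi(n) = \chi^n q^{-|n|}\), \(\Phi_w(n) = -\chi^n q^{-|n-1|}\). Then \((1+q)^{-1}\left(\sum_{n\in\mathbb{Z}}\Phi'(n)\Phi(n)\,q^{|n|} + \sum_{n\in\mathbb{Z}}\Phi''(n)\Phi_w(n)\,q^{|n-1|}\right) = (1+q)^{-1}\,(1+\chi'\chi)\,\frac{1+\chi'\chi\, q^{-2}}{1-\chi'\chi\,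 q^{-2}}\). -/
/-!
With `ε = χ' χ` and `a = ε q⁻²`, both summands collapse to two-sided geometric terms: the
first series is `∑ₙ a^|n|` and the second, since `ε² = 1` gives `εⁿ = ε · ε^|n-1|`, is
`ε ∑ₙ a^|n-1|`. A two-sided geometric series sums to `(1 + a) / (1 - a)`, whence the
factor `1 + ε`.
-/

theorem zpow_abs_of_sq_eq_one {α : Type*} [DivisionMonoid α] {ε : α} (hε : ε ^ 2 = 1) (n : ℤ) :
    ε ^ |n| = ε ^ n := by
  have hinv : ε⁻¹ = ε := inv_eq_of_mul_eq_one_right (by rw [← sq, hε])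
  rcases abs_choice n with h | h
  · rw [h]
  · rw [h, zpow_neg, ← inv_zpow, hinv]

section NormedField

variable {K : Type*} [NormedField K]

theorem hasSum_zpow_abs {a : K} (ha : ‖a‖ < 1) :
    HasSum (fun n : ℤ => a ^ |n|) ((1 + a) / (1 - a)) := by
  have hgeom := hasSum_geometric_of_norm_lt_one ha
  have hne : 1 - a ≠ 0 := sub_ne_zero.mpr (by rintro rfl; simp at ha)
  have hneg : HasSum (fun n : ℕ => a ^ |-((n : ℤ) + 1)|) (a * (1 - a)⁻¹) := by
    refine (hgeom.mul_left a).congr_fun fun n => ?_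
    rw [abs_neg, ← Nat.cast_succ, Nat.abs_cast, zpow_natCast, pow_succ']
  have hpos : HasSum (fun n : ℕ => a ^ |(n : ℤ)|) (1 - a)⁻¹ :=
    hgeom.congr_fun fun n => by rw [Nat.abs_cast, zpow_natCast]
  convert HasSum.of_nat_of_neg_add_one (f := fun n : ℤ => a ^ |n|) hpos hneg using 1
  field_simp

theorem hasSum_zpow_abs_sub {a : K} (ha : ‖a‖ < 1) (k : ℤ) :
    HasSum (fun n : ℤ => a ^ |n - k|) ((1 + a) / (1 - a)) :=
  (Equiv.subRight k).hasSum_iff (f := fun n : ℤ => a ^ |n|) |>.mpr (hasSum_zpow_abs ha)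

theorem special_summand_eq {χ' χ q : K} (hε : (χ' * χ) ^ 2 = 1) (hq : q ≠ 0) (n k : ℤ) :
    (χ' ^ n * q ^ (-(2 * |n - k|))) * (χ ^ n * q ^ (-|n - k|)) * q ^ |n - k|
      = (χ' * χ) ^ k * (χ' * χ * q ^ (-2 : ℤ)) ^ |n - k| := by
  have hε0 : χ' * χ ≠ 0 := by rintro h; simp [h] at hε
  have hsplit : (χ' * χ) ^ n = (χ' * χ) ^ k * (χ' * χ) ^ |n - k| := by
    rw [zpow_abs_of_sq_eq_one hε, ← zpow_add₀ hε0, add_sub_cancel]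
  have hcancel : q ^ (-|n - k|) * q ^ |n - k| = 1 := by
    rw [← zpow_add₀ hq, neg_add_cancel, zpow_zero]
  calc (χ' ^ n * q ^ (-(2 * |n - k|))) * (χ ^ n * q ^ (-|n - k|)) * q ^ |n - k|
      = (χ' * χ) ^ n * q ^ (-2 * |n - k|) * (q ^ (-|n - k|) * q ^ |n - k|) := by
        rw [mul_zpow, neg_mul]; ring
    _ = (χ' * χ) ^ k * (χ' * χ * q ^ (-2 : ℤ)) ^ |n - k| := by
        rw [hcancel, mul_one, hsplit, zpow_mul, mul_assoc, ← mul_zpow]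

theorem hasSum_special_summand {χ' χ q : K} (hε : (χ' * χ) ^ 2 = 1) (hq : 1 < ‖q‖) (k : ℤ) :
    HasSum (fun n : ℤ =>
        (χ' ^ n * q ^ (-(2 * |n - k|))) * (χ ^ n * q ^ (-|n - k|)) * q ^ |n - k|)
      ((χ' * χ) ^ k * ((1 + χ' * χ * q ^ (-2 : ℤ)) / (1 - χ' * χ * q ^ (-2 : ℤ)))) := by
  have hnormε : ‖χ' * χ‖ = 1 := by
    refine (pow_eq_one_iff_of_nonneg (norm_nonneg _) two_ne_zero).mp ?_
    rw [← norm_pow, hε, norm_one]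
  have ha : ‖χ' * χ * q ^ (-2 : ℤ)‖ < 1 := by
    rw [norm_mul, hnormε, one_mul, norm_zpow]
    exact zpow_lt_one_of_neg₀ hq (by norm_num)
  have hq0 : q ≠ 0 := norm_pos_iff.mp (one_pos.trans hq)
  simpa only [special_summand_eq hε hq0] using (hasSum_zpow_abs_sub ha k).mul_left _

end NormedField

/-- Local zeta integral for `E = K × F`, `K/F` unramified, both components
unramified special. -/
theorem stmt16 (q χ' χ : ℝ) (hq : 1 < q)
    (hχ' : χ' = 1 ∨ χ' = -1) (hχ : χ = 1 ∨ χ = -1) :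
    (1 + q)⁻¹ *
        ((∑' n : ℤ, (χ' ^ n * q ^ (-(2 * |n|))) * (χ ^ n * q ^ (-|n|)) * q ^ |n|) +
          ∑' n : ℤ,
            (-(χ' ^ n * q ^ (-(2 * |n - 1|)))) * (-(χ ^ n * q ^ (-|n - 1|))) * q ^ |n - 1|)
      = (1 + q)⁻¹ * (1 + χ' * χ) *
          ((1 + χ' * χ * q ^ (-2 : ℤ)) / (1 - χ' * χ * q ^ (-2 : ℤ))) := by
  have hε : (χ' * χ) ^ 2 = 1 := by
    rcases hχ' with rfl | rfl <;> rcases hχ with rfl | rfl <;> norm_num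
  have hnorm : 1 < ‖q‖ := by rwa [Real.norm_of_nonneg (by linarith)]
  have hfirst := hasSum_special_summand hε hnorm 0
  have hsecond := hasSum_special_summand hε hnorm 1
  simp only [sub_zero, zpow_zero, one_mul] at hfirst
  simp only [zpow_one] at hsecond
  simp only [neg_mul_neg]
  rw [hfirst.tsum_eq, hsecond.tsum_eq]
  ring
end

section
/- Let \(a, b, c\) be nonnegative integers. Consider polynomials in three pairs of variables \((X_i, Y_i)\), i = 1,2,3, and define \(P = (X_1Y_2 - X_2Y_1)^{c}\,(X_2Y_3 - X_3Y_2)^{a}\,(X_3Y_1 - X_1Y_3)^{b}\). Expanding P in the monomial basis, the coefficient of the monomial \(X_1^{b+c}\,Y_2^{a+c}\,X_3^{a}Y_3^{b}\) equals \((-1)^{a+b}\), and the coefficient of \(Y_1^{b+c}\,X_2^{a+c}\,X_3^{b}Y_3^{a}\) equals \((-1)^{c}\). -/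
open MvPolynomial

lemma coeff_aeval_keep {σ : Type*} [DecidableEq σ] (g : σ → MvPolynomial σ ℤ)
    (hg : ∀ i, g i = 0 ∨ g i = X i) (p : MvPolynomial σ ℤ) :
    ∀ m : σ →₀ ℕ, (∀ i, g i = 0 → m i = 0) →
      MvPolynomial.coeff m (MvPolynomial.aeval g p) = MvPolynomial.coeff m p := by
  induction p using MvPolynomial.induction_on with
  | C r => intro m hm; simp
  | add p q hp hq => intro m hm; simp only [map_add, coeff_add, hp m hm, hq m hm]
  | mul_X p i hp =>
    intro m hm
    rcases hg i with h0 | hX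
    · rw [map_mul, aeval_X, h0, mul_zero, coeff_zero, coeff_mul_X']
      rw [if_neg]
      simp [Finsupp.mem_support_iff, hm i h0]
    · rw [map_mul, aeval_X, hX, coeff_mul_X', coeff_mul_X']
      split_ifs with h
      · exact hp _ (fun j hj => by simp [Finsupp.coe_tsub, hm j hj])
      · rfl

/-- Coefficient extractions from the `SU(2)`-invariant vector
`P = (X₁Y₂-X₂Y₁)^c (X₂Y₃-X₃Y₂)^a (X₃Y₁-X₁Y₃)^b`.
Variables: `0 ↦ X₁, 1 ↦ Y₁, 2 ↦ X₂, 3 ↦ Y₂, 4 ↦ X₃, 5 ↦ Y₃`. -/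
theorem stmt19 (a b c : ℕ) :
    let X₁ : MvPolynomial (Fin 6) ℤ := X 0
    let Y₁ : MvPolynomial (Fin 6) ℤ := X 1
    let X₂ : MvPolynomial (Fin 6) ℤ := X 2
    let Y₂ : MvPolynomial (Fin 6) ℤ := X 3
    let X₃ : MvPolynomial (Fin 6) ℤ := X 4
    let Y₃ : MvPolynomial (Fin 6) ℤ := X 5
    let P : MvPolynomial (Fin 6) ℤ :=
      (X₁ * Y₂ - X₂ * Y₁) ^ c * (X₂ * Y₃ - X₃ * Y₂) ^ a * (X₃ * Y₁ - X₁ * Y₃) ^ b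
    MvPolynomial.coeff
        (Finsupp.single 0 (b + c) + Finsupp.single 3 (a + c) +
          Finsupp.single 4 a + Finsupp.single 5 b) P = (-1) ^ (a + b) ∧
      MvPolynomial.coeff
        (Finsupp.single 1 (b + c) + Finsupp.single 2 (a + c) +
          Finsupp.single 4 b + Finsupp.single 5 a) P = (-1) ^ c := by
  intro X₁ Y₁ X₂ Y₂ X₃ Y₃ P
  constructor
  · -- kill variables 1 and 2
    set g : Fin 6 → MvPolynomial (Fin 6) ℤ :=
      fun i => if i = 1 ∨ i = 2 then 0 else X i with hgdef
    have hg : ∀ i, g i = 0 ∨ g i = X i := by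
      intro i; by_cases h : i = 1 ∨ i = 2 <;> simp [hgdef, h]
    set m : Fin 6 →₀ ℕ := Finsupp.single 0 (b + c) + Finsupp.single 3 (a + c) +
          Finsupp.single 4 a + Finsupp.single 5 b with hmdef
    have hm : ∀ i, g i = 0 → m i = 0 := by
      intro i hi
      have hi' : i = 1 ∨ i = 2 := by
        by_contra h; simp [hgdef, h] at hi
      rcases hi' with h | h <;> subst h <;>
        simp [hmdef, Finsupp.single_apply]
    rw [← coeff_aeval_keep g hg P m hm]
    have hP : (MvPolynomial.aeval g P : MvPolynomial (Fin 6) ℤ) =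
        (-1 : MvPolynomial (Fin 6) ℤ) ^ (a + b) *
          (X 0 ^ (b + c) * X 3 ^ (a + c) * X 4 ^ a * X 5 ^ b) := by
      show (MvPolynomial.aeval g) ((X 0 * X 3 - X 2 * X 1) ^ c * (X 2 * X 5 - X 4 * X 3) ^ a *
          (X 4 * X 1 - X 0 * X 5) ^ b) = _
      simp only [map_mul, map_pow, map_sub, aeval_X]
      have h0 : g 0 = X 0 := by simp [hgdef]
      have h1 : g 1 = 0 := by simp [hgdef]
      have h2 : g 2 = 0 := by simp [hgdef]
      have h3 : g 3 = X 3 := by simp [hgdef]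
      have h4 : g 4 = X 4 := by simp [hgdef]
      have h5 : g 5 = X 5 := by simp [hgdef]
      rw [h0, h1, h2, h3, h4, h5]
      ring
    rw [hP]
    rw [show ((-1 : MvPolynomial (Fin 6) ℤ) ^ (a+b)) = MvPolynomial.C ((-1:ℤ)^(a+b)) by
      simp]
    simp only [X_pow_eq_monomial, monomial_mul, mul_one, C_mul_monomial]
    rw [coeff_monomial, if_pos rfl]
  · -- kill variables 0 and 3
    set g : Fin 6 → MvPolynomial (Fin 6) ℤ :=
      fun i => if i = 0 ∨ i = 3 then 0 else X i with hgdef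
    have hg : ∀ i, g i = 0 ∨ g i = X i := by
      intro i; by_cases h : i = 0 ∨ i = 3 <;> simp [hgdef, h]
    set m : Fin 6 →₀ ℕ := Finsupp.single 1 (b + c) + Finsupp.single 2 (a + c) +
          Finsupp.single 4 b + Finsupp.single 5 a with hmdef
    have hm : ∀ i, g i = 0 → m i = 0 := by
      intro i hi
      have hi' : i = 0 ∨ i = 3 := by
        by_contra h; simp [hgdef, h] at hi
      rcases hi' with h | h <;> subst h <;>
        simp [hmdef, Finsupp.single_apply]
    rw [← coeff_aeval_keep g hg P m hm]
    have hP : (MvPolynomial.aeval g P : MvPolynomial (Fin 6) ℤ) =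
        (-1 : MvPolynomial (Fin 6) ℤ) ^ c *
          (X 1 ^ (b + c) * X 2 ^ (a + c) * X 4 ^ b * X 5 ^ a) := by
      show (MvPolynomial.aeval g) ((X 0 * X 3 - X 2 * X 1) ^ c * (X 2 * X 5 - X 4 * X 3) ^ a *
          (X 4 * X 1 - X 0 * X 5) ^ b) = _
      simp only [map_mul, map_pow, map_sub, aeval_X]
      have h0 : g 0 = 0 := by simp [hgdef]
      have h1 : g 1 = X 1 := by simp [hgdef]
      have h2 : g 2 = X 2 := by simp [hgdef]
      have h3 : g 3 = 0 := by simp [hgdef]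
      have h4 : g 4 = X 4 := by simp [hgdef]
      have h5 : g 5 = X 5 := by simp [hgdef]
      rw [h0, h1, h2, h3, h4, h5]
      ring
    rw [hP]
    rw [show ((-1 : MvPolynomial (Fin 6) ℤ) ^ c) = MvPolynomial.C ((-1:ℤ)^c) by simp]
    simp only [X_pow_eq_monomial, monomial_mul, mul_one, C_mul_monomial]
    rw [coeff_monomial, if_pos rfl]
end
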